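/- The Bessel function J₀ satisfies J₀(x) > 0 for every x ∈ [0, 2.4048] and J₀(2.4049) < 0. Consequently J₀ has a zero in the open interval (2.4048, 2.4049), and its smallest positive zero j₀,₁ lies in that interval. -/

import Mathlib

/-!
With `t = (x/2)²` we have `J₀(x) = ∑ (-1)ᵏ tᵏ/(k!)²`, and for `t ≤ 4` the terms after the first
decrease, so the partial sums alternately bound `J₀(x)` from above and below. The partial sum of
degree 7 is decreasing in `t` on `[0, 2]` and positive at `t = 1.2024²`, which gives `J₀ > 0` on
`[0, 2.4048]`; the partial sum of degree 6 is already negative at `t = 1.20245²`. The intermediate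
value theorem then produces a zero in `(2.4048, 2.4049)`, and by continuity the infimum of the
positive zeros is itself a zero, hence lies strictly above `2.4048`.
-/

/-- The Bessel function of the first kind of order `0`, defined by its everywhere-convergent
power series `J₀(x) = Σ_{k≥0} (−1)^k (x/2)^{2k} / (k!)²`. -/
noncomputable def besselJ₀ (x : ℝ) : ℝ :=
  ∑' k : ℕ, (-1 : ℝ) ^ k * (x / 2) ^ (2 * k) / ((Nat.factorial k : ℝ) ^ 2)

open Finset Filter Topology Set Nat

lemma sInf_pos_zeros_mem_Ioo {f : ℝ → ℝ} (hf : Continuous f) {a b x₀ : ℝ} (ha : 0 ≤ a)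
    (hpos : ∀ x ∈ Icc 0 a, 0 < f x) (hx₀ : x₀ ∈ Ioo a b) (hfx₀ : f x₀ = 0) :
    sInf {x | 0 < x ∧ f x = 0} ∈ Ioo a b := by
  set Z := {x | 0 < x ∧ f x = 0}
  have hx₀Z : x₀ ∈ Z := ⟨ha.trans_lt hx₀.1, hfx₀⟩
  have hZ : Z ⊆ Ici a ∩ f ⁻¹' {0} := fun z hz ↦
    ⟨le_of_not_ge fun hza ↦ (hpos z ⟨hz.1.le, hza⟩).ne' hz.2, hz.2⟩
  have hbdd : BddBelow Z := ⟨a, fun z hz ↦ (hZ hz).1⟩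
  obtain ⟨hle, hzero⟩ : sInf Z ∈ Ici a ∩ f ⁻¹' {0} :=
    (isClosed_Ici.inter (isClosed_singleton.preimage hf)).closure_subset_iff.2 hZ
      (csInf_mem_closure ⟨x₀, hx₀Z⟩ hbdd)
  refine ⟨hle.lt_of_ne ?_, (csInf_le hbdd hx₀Z).trans_lt hx₀.2⟩
  rintro rfl
  exact (hpos _ ⟨ha, le_rfl⟩).ne' hzero

noncomputable def besselTerm (t : ℝ) (k : ℕ) : ℝ := t ^ k / (k ! : ℝ) ^ 2

lemma besselJ₀_eq_tsum (x : ℝ) : besselJ₀ x = ∑' k, (-1) ^ k * besselTerm ((x / 2) ^ 2) k := by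
  simp only [besselJ₀, besselTerm, pow_mul, mul_div_assoc]

lemma besselTerm_nonneg {t : ℝ} (ht : 0 ≤ t) (k : ℕ) : 0 ≤ besselTerm t k := by
  unfold besselTerm; positivity

lemma besselTerm_le_pow_div_factorial {t : ℝ} (ht : 0 ≤ t) (k : ℕ) :
    besselTerm t k ≤ t ^ k / k ! := by
  have h1 : (1 : ℝ) ≤ k ! := mod_cast k.factorial_pos
  exact div_le_div_of_nonneg_left (by positivity) (by positivity) (by nlinarith)

lemma summable_besselTerm {t : ℝ} (ht : 0 ≤ t) : Summable (besselTerm t) :=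
  (Real.summable_pow_div_factorial t).of_nonneg_of_le (besselTerm_nonneg ht)
    (besselTerm_le_pow_div_factorial ht)

lemma besselTerm_succ (t : ℝ) (k : ℕ) :
    besselTerm t (k + 1) = besselTerm t k * (t / ((k : ℝ) + 1) ^ 2) := by
  simp only [besselTerm, factorial_succ, cast_mul, cast_succ, pow_succ]
  field_simp

lemma antitone_besselTerm_succ {t : ℝ} (ht₀ : 0 ≤ t) (ht₄ : t ≤ 4) :
    Antitone fun k ↦ besselTerm t (k + 1) := by
  refine antitone_nat_of_succ_le fun k ↦ ?_
  rw [besselTerm_succ t (k + 1)]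
  have hratio : t / ((k + 1 : ℕ) + 1 : ℝ) ^ 2 ≤ 1 := by
    rw [div_le_one (by positivity)]
    have : (2 : ℝ) ≤ (k + 1 : ℕ) + 1 := by push_cast; linarith [(k.cast_nonneg : (0:ℝ) ≤ k)]
    nlinarith
  exact mul_le_of_le_one_right (besselTerm_nonneg ht₀ _) hratio

lemma sum_range_succ_alternating_besselTerm (t : ℝ) (n : ℕ) :
    ∑ k ∈ range (n + 1), (-1) ^ k * besselTerm t k =
      1 - ∑ k ∈ range n, (-1) ^ k * besselTerm t (k + 1) := by
  rw [sum_range_succ']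
  simp only [pow_succ, besselTerm, pow_zero, one_mul, mul_neg, mul_one, neg_mul, sum_neg_distrib,
    factorial_zero, cast_one, div_one]
  ring

lemma tsum_alternating_besselTerm {t : ℝ} (ht : 0 ≤ t) :
    ∑' k, (-1) ^ k * besselTerm t k = 1 - ∑' k, (-1) ^ k * besselTerm t (k + 1) := by
  have hs := summable_besselTerm ht
  rw [hs.alternating.tsum_eq_zero_add]
  simp [pow_succ, besselTerm, tsum_neg, sub_eq_add_neg]

lemma tendsto_alternating_besselTerm_succ {t : ℝ} (ht : 0 ≤ t) :
    Tendsto (fun n ↦ ∑ k ∈ range n, (-1) ^ k * besselTerm t (k + 1)) atTop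
      (𝓝 (∑' k, (-1) ^ k * besselTerm t (k + 1))) :=
  ((summable_nat_add_iff 1).2 (summable_besselTerm ht)).tendsto_alternating_series_tsum

lemma sum_alternating_besselTerm_le_besselJ₀ {x : ℝ} (hx : |x| ≤ 4) (m : ℕ) :
    ∑ k ∈ range (2 * m + 2), (-1) ^ k * besselTerm ((x / 2) ^ 2) k ≤ besselJ₀ x := by
  have ht₀ : 0 ≤ (x / 2) ^ 2 := sq_nonneg _
  have ht₄ : (x / 2) ^ 2 ≤ 4 := by nlinarith [abs_le.1 hx]
  rw [besselJ₀_eq_tsum, tsum_alternating_besselTerm ht₀, sum_range_succ_alternating_besselTerm]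
  exact sub_le_sub_left ((antitone_besselTerm_succ ht₀ ht₄).tendsto_le_alternating_series
    (tendsto_alternating_besselTerm_succ ht₀) m) 1

lemma besselJ₀_le_sum_alternating_besselTerm {x : ℝ} (hx : |x| ≤ 4) (m : ℕ) :
    besselJ₀ x ≤ ∑ k ∈ range (2 * m + 1), (-1) ^ k * besselTerm ((x / 2) ^ 2) k := by
  have ht₀ : 0 ≤ (x / 2) ^ 2 := sq_nonneg _
  have ht₄ : (x / 2) ^ 2 ≤ 4 := by nlinarith [abs_le.1 hx]
  rw [besselJ₀_eq_tsum, tsum_alternating_besselTerm ht₀, sum_range_succ_alternating_besselTerm]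
  exact sub_le_sub_left ((antitone_besselTerm_succ ht₀ ht₄).alternating_series_le_tendsto
    (tendsto_alternating_besselTerm_succ ht₀) m) 1

lemma continuousOn_besselJ₀_Icc (R : ℝ) : ContinuousOn besselJ₀ (Icc (-R) R) := by
  have hR : ∀ x ∈ Icc (-R) R, (x / 2) ^ 2 ≤ (R / 2) ^ 2 := fun x hx ↦
    sq_le_sq' (by linarith [hx.1]) (by linarith [hx.2])
  simp_rw [funext besselJ₀_eq_tsum]
  refine continuousOn_tsum (fun k ↦ by unfold besselTerm; fun_prop)
    (summable_besselTerm (sq_nonneg (R / 2))) fun k x hx ↦ ?_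
  rw [norm_mul, norm_pow, norm_neg, norm_one, one_pow, one_mul,
    Real.norm_of_nonneg (besselTerm_nonneg (sq_nonneg _) k)]
  exact div_le_div_of_nonneg_right (pow_le_pow_left₀ (sq_nonneg _) (hR x hx) k) (by positivity)

lemma continuous_besselJ₀ : Continuous besselJ₀ :=
  continuous_iff_continuousAt.2 fun x ↦ (continuousOn_besselJ₀_Icc (|x| + 1)).continuousAt
    (Icc_mem_nhds (by linarith [neg_abs_le x]) (by linarith [le_abs_self x]))

lemma sum_range_eight_alternating_besselTerm (t : ℝ) :
    ∑ k ∈ range 8, (-1) ^ k * besselTerm t k =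
      1 - t + t^2/4 - t^3/36 + t^4/576 - t^5/14400 + t^6/518400 - t^7/25401600 := by
  norm_num [sum_range_succ, besselTerm, factorial]
  ring

lemma antitoneOn_sum_range_eight_alternating_besselTerm :
    AntitoneOn (fun t ↦ ∑ k ∈ range 8, (-1) ^ k * besselTerm t k) (Icc 0 2) := by
  simp_rw [sum_range_eight_alternating_besselTerm]
  refine antitoneOn_of_deriv_nonpos (convex_Icc 0 2) (by fun_prop) (by fun_prop) fun t ht ↦ ?_
  rw [interior_Icc] at ht
  have h0 := ht.1.le
  have h2 := ht.2.le
  have hderiv : deriv (fun t : ℝ ↦ 1 - t + t^2/4 - t^3/36 + t^4/576 - t^5/14400 + t^6/518400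
      - t^7/25401600) t = -1 + t/2 - t^2/12 + t^3/144 - t^4/2880 + t^5/86400 - t^6/3628800 := by
    simp (disch := fun_prop) only [deriv_fun_sub, deriv_fun_add, deriv_const_sub_id',
      deriv_div_const, deriv_fun_pow, deriv_id'']
    ring
  rw [hderiv]
  -- minus the derivative is `(1 - t/2) + t²(12 - t)/144 + t⁴(30 - t)/86400 + t⁶/3628800`
  nlinarith [mul_nonneg (pow_nonneg h0 2) (by linarith : (0:ℝ) ≤ 12 - t),
    mul_nonneg (pow_nonneg h0 4) (by linarith : (0:ℝ) ≤ 30 - t), pow_nonneg h0 6]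

lemma besselJ₀_pos_of_mem_Icc {x : ℝ} (hx : x ∈ Icc (0 : ℝ) 2.4048) : 0 < besselJ₀ x := by
  have ht : (x / 2) ^ 2 ∈ Icc (0 : ℝ) ((2.4048 / 2) ^ 2) :=
    ⟨sq_nonneg _, pow_le_pow_left₀ (by linarith [hx.1]) (by linarith [hx.2]) 2⟩
  calc 0 < ∑ k ∈ range 8, (-1) ^ k * besselTerm ((2.4048 / 2) ^ 2) k := by
        rw [sum_range_eight_alternating_besselTerm]; norm_num
    _ ≤ ∑ k ∈ range 8, (-1) ^ k * besselTerm ((x / 2) ^ 2) k :=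
        antitoneOn_sum_range_eight_alternating_besselTerm ⟨ht.1, ht.2.trans (by norm_num)⟩
          ⟨by norm_num, by norm_num⟩ ht.2
    _ ≤ besselJ₀ x := sum_alternating_besselTerm_le_besselJ₀
        (by rw [abs_of_nonneg hx.1]; linarith [hx.2]) 3

lemma besselJ₀_2_4049_neg : besselJ₀ 2.4049 < 0 := by
  refine (besselJ₀_le_sum_alternating_besselTerm (by norm_num) 3).trans_lt ?_
  norm_num [sum_range_succ, besselTerm, factorial]

/-- `J₀ > 0` on `[0, 2.4048]`, `J₀(2.4049) < 0`; hence `J₀` has a zero in `(2.4048, 2.4049)`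
and its smallest positive zero `j₀,₁` lies in that interval. -/
theorem besselJ₀_first_zero_location :
    (∀ x ∈ Set.Icc (0 : ℝ) 2.4048, 0 < besselJ₀ x) ∧
    besselJ₀ 2.4049 < 0 ∧
    (∃ x ∈ Set.Ioo (2.4048 : ℝ) 2.4049, besselJ₀ x = 0) ∧
    sInf {x : ℝ | 0 < x ∧ besselJ₀ x = 0} ∈ Set.Ioo (2.4048 : ℝ) 2.4049 := by
  have hpos : ∀ x ∈ Icc (0 : ℝ) 2.4048, 0 < besselJ₀ x := fun _ ↦ besselJ₀_pos_of_mem_Icc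
  have hneg := besselJ₀_2_4049_neg
  obtain ⟨x₀, hx₀, hzero⟩ : ∃ x ∈ Ioo (2.4048 : ℝ) 2.4049, besselJ₀ x = 0 :=
    intermediate_value_Ioo' (by norm_num) continuous_besselJ₀.continuousOn
      ⟨hneg, hpos _ ⟨by norm_num, le_rfl⟩⟩
  exact ⟨hpos, hneg, ⟨x₀, hx₀, hzero⟩,
    sInf_pos_zeros_mem_Ioo continuous_besselJ₀ (by norm_num) hpos hx₀ hzero⟩
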